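/- arXiv:2504.09269 — 3 statements merged into one kernel-verified Lean document; each statement's English description precedes it below -/
import Mathlib

section
/- Let ε_∞ > 0, a ≥ 0, and E_x, E_y ∈ ℝ. The 2×2 symmetric matrix M with M₁₁ = ε_∞ + a(3E_x² + E_y²), M₂₂ = ε_∞ + a(E_x² + 3E_y²), M₁₂ = M₂₁ = 2a·E_x·E_y is positive definite. -/
/-!
The matrix is `(ε∞ + a‖E‖²) I + 2a E Eᵀ`, the linearisation of `E ↦ (ε∞ + a‖E‖²) E`:
a positive multiple of the identity plus a nonnegative multiple of the rank-one
positive semidefinite matrix `E Eᵀ`.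
-/

open Matrix

theorem Matrix.posDef_smul_one_add_smul_vecMulVec_self {n : Type*} [Fintype n] [DecidableEq n]
    {c b : ℝ} (hc : 0 < c) (hb : 0 ≤ b) (v : n → ℝ) :
    (c • (1 : Matrix n n ℝ) + b • vecMulVec v v).PosDef := by
  have hvv : (vecMulVec v v).PosSemidef := by
    simpa using posSemidef_vecMulVec_self_star v
  exact (PosDef.one.smul hc).add_posSemidef (hvv.smul hb)

theorem stmt_2 (εinf a Ex Ey : ℝ) (hε : 0 < εinf) (ha : 0 ≤ a) :
    (!![εinf + a * (3 * Ex ^ 2 + Ey ^ 2), 2 * a * Ex * Ey;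
       2 * a * Ex * Ey, εinf + a * (Ex ^ 2 + 3 * Ey ^ 2)] :
      Matrix (Fin 2) (Fin 2) ℝ).PosDef := by
  have hM : (!![εinf + a * (3 * Ex ^ 2 + Ey ^ 2), 2 * a * Ex * Ey;
      2 * a * Ex * Ey, εinf + a * (Ex ^ 2 + 3 * Ey ^ 2)] : Matrix (Fin 2) (Fin 2) ℝ) =
      (εinf + a * (Ex ^ 2 + Ey ^ 2)) • 1 + (2 * a) • vecMulVec ![Ex, Ey] ![Ex, Ey] := by
    ext i j
    fin_cases i <;> fin_cases j <;> simp <;> ring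
  rw [hM]
  exact posDef_smul_one_add_smul_vecMulVec_self (by positivity) (by positivity) _
end

section
/- Let E : ℝ → ℝ^{N+1} be differentiable, φ_k = Σ_{p=0}^{k} E_p E_{k-p}, and ψ_k = Σ_{p=0}^{k} E_p φ_{k-p}. Then for each k, ψ_k' = 3 E_k' φ_0 + Σ_{p=0}^{k-1} ( E_p' φ_{k-p} + (φ_p' + 2 E_p' E_0) E_{k-p} ), where φ_0 = E_0². -/
/-! Differentiating the Cauchy product `ψ_k = ∑ E_p φ_{k-p}` termwise and reflecting the
second sum gives `ψ_k' = ∑_{p ≤ k} E_p' φ_{k-p} + ∑_{p ≤ k} φ_p' E_{k-p}`. The `p = k` terms are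
`E_k' φ_0 + φ_k' E_0`, and `φ_k' = 2 ∑_{p ≤ k} E_p' E_{k-p}` contributes a further `2 E_k' E_0²`,
which is where the coefficient `3` comes from. -/

open Finset

theorem sum_range_succ_mul_sub_comm {R : Type*} [CommSemiring R] (f g : ℕ → R) (n : ℕ) :
    ∑ p ∈ range (n + 1), f p * g (n - p) = ∑ p ∈ range (n + 1), g p * f (n - p) := by
  rw [← sum_range_reflect]
  refine sum_congr rfl fun p hp => ?_
  have hpn : p ≤ n := Nat.lt_succ_iff.mp (mem_range.mp hp)
  rw [show n + 1 - 1 - p = n - p by omega, Nat.sub_sub_self hpn, mul_comm]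

section

variable {𝕜 : Type*} [NontriviallyNormedField 𝕜] {t : 𝕜}

theorem deriv_sum_mul {ι : Type*} {f g : ι → 𝕜 → 𝕜} {s : Finset ι}
    (hf : ∀ p ∈ s, DifferentiableAt 𝕜 (f p) t) (hg : ∀ p ∈ s, DifferentiableAt 𝕜 (g p) t) :
    deriv (fun x => ∑ p ∈ s, f p x * g p x) t
      = ∑ p ∈ s, (deriv (f p) t * g p t + f p t * deriv (g p) t) := by
  rw [deriv_fun_sum (A := fun p x => f p x * g p x) fun p hp => (hf p hp).mul (hg p hp)]
  exact sum_congr rfl fun p hp => deriv_fun_mul (hf p hp) (hg p hp)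

theorem deriv_sum_range_mul_sub {f g : ℕ → 𝕜 → 𝕜} (hf : ∀ p, DifferentiableAt 𝕜 (f p) t)
    (hg : ∀ p, DifferentiableAt 𝕜 (g p) t) (n : ℕ) :
    deriv (fun x => ∑ p ∈ range (n + 1), f p x * g (n - p) x) t
      = ∑ p ∈ range (n + 1), deriv (f p) t * g (n - p) t
        + ∑ p ∈ range (n + 1), deriv (g p) t * f (n - p) t := by
  rw [deriv_sum_mul (fun p _ => hf p) (fun p _ => hg (n - p)), sum_add_distrib,
    sum_range_succ_mul_sub_comm (fun p => f p t) (fun p => deriv (g p) t)]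

/-- The coefficient of `X ^ j` in `(∑ p, f p x • X ^ p) ^ 2`. -/
def cauchySq (f : ℕ → 𝕜 → 𝕜) (j : ℕ) (x : 𝕜) : 𝕜 :=
  ∑ p ∈ range (j + 1), f p x * f (j - p) x

theorem cauchySq_zero (f : ℕ → 𝕜 → 𝕜) (x : 𝕜) : cauchySq f 0 x = f 0 x * f 0 x := by
  simp [cauchySq]

theorem differentiableAt_cauchySq {f : ℕ → 𝕜 → 𝕜} (hf : ∀ p, DifferentiableAt 𝕜 (f p) t)
    (j : ℕ) : DifferentiableAt 𝕜 (cauchySq f j) t := by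
  unfold cauchySq
  fun_prop

theorem deriv_cauchySq {f : ℕ → 𝕜 → 𝕜} (hf : ∀ p, DifferentiableAt 𝕜 (f p) t) (j : ℕ) :
    deriv (cauchySq f j) t = 2 * ∑ p ∈ range (j + 1), deriv (f p) t * f (j - p) t := by
  unfold cauchySq
  rw [deriv_sum_range_mul_sub hf hf, two_mul]

end

theorem stmt_7_general (E : ℕ → ℝ → ℝ) (hE : ∀ p, Differentiable ℝ (E p))
    (k : ℕ) (t : ℝ) :
    let φ : ℕ → ℝ → ℝ := fun j s => ∑ p ∈ Finset.range (j + 1), E p s * E (j - p) s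
    deriv (fun s => ∑ p ∈ Finset.range (k + 1), E p s * φ (k - p) s) t
      = 3 * deriv (E k) t * φ 0 t
        + ∑ p ∈ Finset.range k,
            (deriv (E p) t * φ (k - p) t
              + (deriv (φ p) t + 2 * deriv (E p) t * E 0 t) * E (k - p) t) := by
  intro φ
  rw [show φ = cauchySq E from rfl]
  have hEt : ∀ p, DifferentiableAt ℝ (E p) t := fun p => hE p t
  rw [deriv_sum_range_mul_sub hEt (differentiableAt_cauchySq hEt), sum_range_succ,
    sum_range_succ, deriv_cauchySq hEt k, sum_range_succ, Nat.sub_self, cauchySq_zero]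
  have hsplit : ∑ p ∈ range k, (deriv (E p) t * cauchySq E (k - p) t
        + (deriv (cauchySq E p) t + 2 * deriv (E p) t * E 0 t) * E (k - p) t)
      = ∑ p ∈ range k, deriv (E p) t * cauchySq E (k - p) t
        + ∑ p ∈ range k, deriv (cauchySq E p) t * E (k - p) t
        + 2 * E 0 t * ∑ p ∈ range k, deriv (E p) t * E (k - p) t := by
    rw [mul_sum, ← sum_add_distrib, ← sum_add_distrib]
    exact sum_congr rfl fun p _ => by ring
  rw [hsplit]
  ring

theorem stmt_7 (N : ℕ) (E : ℕ → ℝ → ℝ) (hE : ∀ p, Differentiable ℝ (E p))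
    (k : ℕ) (hk : k ≤ N) (t : ℝ) :
    let φ : ℕ → ℝ → ℝ := fun j s => ∑ p ∈ Finset.range (j + 1), E p s * E (j - p) s
    deriv (fun s => ∑ p ∈ Finset.range (k + 1), E p s * φ (k - p) s) t
      = 3 * deriv (E k) t * φ 0 t
        + ∑ p ∈ Finset.range k,
            (deriv (E p) t * φ (k - p) t
              + (deriv (φ p) t + 2 * deriv (E p) t * E 0 t) * E (k - p) t) :=
  stmt_7_general E hE k t
end

section
/- Let f ∈ C^{2m+2}([x_i, x_{i+1}]) and let p be the unique polynomial of degree at most 2m+1 satisfying p^{(k)}(x_i) = f^{(k)}(x_i) and p^{(k)}(x_{i+1}) = f^{(k)}(x_{i+1}) for k = 0,…,m. Then for all x ∈ (x_i, x_{i+1}) and 0 ≤ k ≤ m+1, |f^{(k)}(x) − p^{(k)}(x)| ≤ ((x − x_i)(x_{i+1} − x))^{m+1−k} (Δx)^{k} / ((2m+2−2k)! k!) · ‖f^{(2m+2)}‖_{C⁰}, where Δx = x_{i+1} − x_i. -/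
/-!
Write `e = f - p`. Since `e` and its first `m` derivatives vanish at both endpoints, `k`
applications of Rolle's theorem give `k` distinct interior zeros `ζ₁, …, ζ_k` of `e⁽ᵏ⁾`. For `x`
not among them, subtract from `e⁽ᵏ⁾` the multiple of the monic polynomial
`W(t) = ((t - xᵢ)(t - xᵢ₊₁))^(m+1-k) ∏ (t - ζⱼ)` of degree `n = 2m + 2 - k` that agrees with it
at `x`. The difference has `n + 1` zeros counted with multiplicity, so its `n`-th derivative
vanishes at some `ξ`, i.e. `n! e⁽ᵏ⁾(x) = f⁽²ᵐ⁺²⁾(ξ) W(x)`. It remains to bound `|W(x)|` and to use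
`(2m + 2 - 2k)! k! ≤ n!`.
-/

open Polynomial Set Finset
open scoped Nat

theorem exists_finset_deriv_eq_zero {g : ℝ → ℝ} {a b : ℝ} (hg : ContinuousOn g (Icc a b))
    (s : Finset ℝ) (hs : ↑s ⊆ Icc a b) (hgs : ∀ x ∈ s, g x = 0) :
    ∃ t : Finset ℝ, ↑t ⊆ Ioo a b ∧ (∀ y ∈ t, deriv g y = 0) ∧ #s ≤ #t + 1 := by
  have rolle : ∀ x ∈ s, ∀ y ∈ s, x < y → ∃ z ∈ Ioo x y, deriv g z = 0 := fun x hx y hy hxy =>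
    exists_deriv_eq_zero hxy (hg.mono (Icc_subset_Icc (hs hx).1 (hs hy).2))
      (by rw [hgs x hx, hgs y hy])
  choose! ρ hρ hρ0 using rolle
  set pairs := (s ×ˢ s).filter fun q => q.1 < q.2
  have hpairs : ∀ q ∈ pairs, q.1 ∈ s ∧ q.2 ∈ s ∧ q.1 < q.2 := by
    simp [pairs, and_assoc]
  refine ⟨pairs.image fun q => ρ q.1 q.2, ?_, ?_, ?_⟩
  · intro z hz
    obtain ⟨q, hq, rfl⟩ := Finset.mem_image.1 hz
    obtain ⟨h1, h2, h12⟩ := hpairs q hq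
    obtain ⟨hlt, hgt⟩ := hρ _ h1 _ h2 h12
    exact ⟨(hs h1).1.trans_lt hlt, hgt.trans_le (hs h2).2⟩
  · intro z hz
    obtain ⟨q, hq, rfl⟩ := Finset.mem_image.1 hz
    obtain ⟨h1, h2, h12⟩ := hpairs q hq
    exact hρ0 _ h1 _ h2 h12
  · exact card_le_of_interleaved fun x hx y hy hxy _ =>
      ⟨ρ x y, Finset.mem_image.2 ⟨(x, y), by simp [pairs, hx, hy, hxy], rfl⟩, hρ x hx y hy hxy⟩

theorem exists_finset_iteratedDeriv_eq_zero {g : ℝ → ℝ} {a b : ℝ} (hab : a < b) {n r : ℕ}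
    (hg : ContDiff ℝ n g) (ha : ∀ j < r, iteratedDeriv j g a = 0)
    (hb : ∀ j < r, iteratedDeriv j g b = 0) (s : Finset ℝ) (hs : ↑s ⊆ Ioo a b)
    (hgs : ∀ x ∈ s, g x = 0) :
    ∃ t : Finset ℝ, ↑t ⊆ Ioo a b ∧ (∀ y ∈ t, iteratedDeriv n g y = 0) ∧
      #s + 2 * min n r ≤ #t + n := by
  -- While `j < r` the endpoints are zeros of `g⁽ʲ⁾` too, so a Rolle step gains a zero;
  -- afterwards it loses at most one.
  induction n with
  | zero => exact ⟨s, hs, by simpa using hgs, by simp⟩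
  | succ n ih =>
    obtain ⟨t, ht, ht0, hcard⟩ := ih (hg.of_le (by norm_cast; omega))
    have hcont : ContinuousOn (iteratedDeriv n g) (Icc a b) :=
      (hg.continuous_iteratedDeriv n (by norm_cast; omega)).continuousOn
    rw [iteratedDeriv_succ]
    by_cases hnr : n < r
    · have hat : a ∉ insert b t := by
        simp only [Finset.mem_insert, not_or]
        exact ⟨hab.ne, fun h => (ht h).1.false⟩
      have hbt : b ∉ t := fun h => (ht h).2.false
      obtain ⟨t', ht', ht'0, hcard'⟩ := exists_finset_deriv_eq_zero hcont (insert a (insert b t))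
        (by simpa [Set.insert_subset_iff, hab.le] using ht.trans Ioo_subset_Icc_self)
        (by simpa [ha n hnr, hb n hnr] using ht0)
      rw [card_insert_of_notMem hat, card_insert_of_notMem hbt] at hcard'
      exact ⟨t', ht', ht'0, by omega⟩
    · obtain ⟨t', ht', ht'0, hcard'⟩ :=
        exists_finset_deriv_eq_zero hcont t (ht.trans Ioo_subset_Icc_self) ht0
      exact ⟨t', ht', ht'0, by omega⟩

theorem Polynomial.contDiff_eval {𝕜 : Type*} [NontriviallyNormedField 𝕜] (q : 𝕜[X])
    (n : WithTop ℕ∞) : ContDiff 𝕜 n fun x => q.eval x := by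
  simpa using q.contDiff_aeval (𝕜 := 𝕜) n

theorem Polynomial.iteratedDeriv_eval {𝕜 : Type*} [NontriviallyNormedField 𝕜] (q : 𝕜[X])
    (n : ℕ) : iteratedDeriv n (fun x => q.eval x) = fun x => (derivative^[n] q).eval x := by
  induction n with
  | zero => simp
  | succ n ih =>
    ext x
    rw [iteratedDeriv_succ, ih, Function.iterate_succ_apply', Polynomial.deriv]

theorem iteratedDeriv_sub_eval {𝕜 : Type*} [NontriviallyNormedField 𝕜] {h : 𝕜 → 𝕜} {n j : ℕ}
    (hh : ContDiff 𝕜 n h) (hj : j ≤ n) (q : 𝕜[X]) (y : 𝕜) :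
    iteratedDeriv j (fun x => h x - q.eval x) y =
      iteratedDeriv j h y - (derivative^[j] q).eval y := by
  rw [iteratedDeriv_fun_sub ((hh.of_le (by exact_mod_cast hj)).contDiffAt)
    (q.contDiff_eval j).contDiffAt, q.iteratedDeriv_eval]

theorem iteratedDeriv_iteratedDeriv {𝕜 F : Type*} [NontriviallyNormedField 𝕜]
    [NormedAddCommGroup F] [NormedSpace 𝕜 F] (j k : ℕ) (f : 𝕜 → F) :
    iteratedDeriv j (iteratedDeriv k f) = iteratedDeriv (j + k) f := by
  simp only [iteratedDeriv_eq_iterate, Function.iterate_add_apply]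

theorem Polynomial.eval_iterate_derivative_eq_zero_of_pow_dvd {R : Type*} [CommRing R]
    {q : R[X]} {a : R} {r j : ℕ} (h : (X - C a) ^ r ∣ q) (hj : j < r) :
    (derivative^[j] q).eval a = 0 :=
  dvd_iff_isRoot.mp <| (dvd_pow_self _ (Nat.sub_ne_zero_of_lt hj)).trans
    (pow_sub_dvd_iterate_derivative_of_pow_dvd j h)

theorem Polynomial.Monic.iterate_derivative_natDegree {R : Type*} [CommRing R] {q : R[X]}
    (hq : q.Monic) : derivative^[q.natDegree] q = C (q.natDegree ! : R) := by
  rw [eq_C_of_natDegree_le_zero ((natDegree_iterate_derivative q _).trans (by omega)),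
    coeff_iterate_derivative, zero_add, Nat.descFactorial_self, hq.coeff_natDegree,
    nsmul_one]

noncomputable def nodePoly (a b : ℝ) (r : ℕ) (t : Finset ℝ) : ℝ[X] :=
  ((X - C a) * (X - C b)) ^ r * ∏ ζ ∈ t, (X - C ζ)

theorem nodePoly_monic (a b : ℝ) (r : ℕ) (t : Finset ℝ) : (nodePoly a b r t).Monic :=
  (((monic_X_sub_C a).mul (monic_X_sub_C b)).pow r).mul
    (monic_prod_of_monic _ _ fun ζ _ => monic_X_sub_C ζ)

theorem natDegree_nodePoly (a b : ℝ) (r : ℕ) (t : Finset ℝ) :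
    (nodePoly a b r t).natDegree = 2 * r + #t := by
  rw [nodePoly, (((monic_X_sub_C a).mul (monic_X_sub_C b)).pow r).natDegree_mul
    (monic_prod_of_monic _ _ fun ζ _ => monic_X_sub_C ζ), natDegree_pow,
    (monic_X_sub_C a).natDegree_mul (monic_X_sub_C b),
    natDegree_prod_of_monic _ _ fun ζ _ => monic_X_sub_C ζ]
  simp [mul_comm]

theorem eval_nodePoly (a b : ℝ) (r : ℕ) (t : Finset ℝ) (x : ℝ) :
    (nodePoly a b r t).eval x = ((x - a) * (x - b)) ^ r * ∏ ζ ∈ t, (x - ζ) := by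
  simp [nodePoly, eval_prod]

theorem abs_eval_nodePoly_le {a b x : ℝ} (hx : x ∈ Icc a b) (r : ℕ) {t : Finset ℝ}
    (ht : ↑t ⊆ Icc a b) :
    |(nodePoly a b r t).eval x| ≤ ((x - a) * (b - x)) ^ r * (b - a) ^ #t := by
  have hab : |(x - a) * (x - b)| = (x - a) * (b - x) := by
    rw [abs_of_nonpos (mul_nonpos_of_nonneg_of_nonpos (by linarith [hx.1]) (by linarith [hx.2]))]
    ring
  calc |(nodePoly a b r t).eval x| = |(x - a) * (x - b)| ^ r * ∏ ζ ∈ t, |x - ζ| := by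
        rw [eval_nodePoly, abs_mul, abs_pow, abs_prod]
    _ ≤ |(x - a) * (x - b)| ^ r * ∏ _ζ ∈ t, (b - a) := by
        gcongr with ζ hζ
        exact abs_sub_le_iff.2 ⟨by linarith [hx.2, (ht hζ).1], by linarith [hx.1, (ht hζ).2]⟩
    _ = ((x - a) * (b - x)) ^ r * (b - a) ^ #t := by rw [hab, prod_const]

theorem eval_nodePoly_eq_zero_of_mem (a b : ℝ) (r : ℕ) {t : Finset ℝ} {ζ : ℝ} (hζ : ζ ∈ t) :
    (nodePoly a b r t).eval ζ = 0 := by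
  rw [eval_nodePoly, prod_eq_zero hζ (sub_self ζ), mul_zero]

theorem exists_factorial_mul_eq_iteratedDeriv_mul_eval_nodePoly {h : ℝ → ℝ} {a b : ℝ}
    (hab : a < b) {r : ℕ} {t : Finset ℝ} (hh : ContDiff ℝ (2 * r + #t : ℕ) h)
    (ha : ∀ j < r, iteratedDeriv j h a = 0) (hb : ∀ j < r, iteratedDeriv j h b = 0)
    (ht : ↑t ⊆ Ioo a b) (hht : ∀ ζ ∈ t, h ζ = 0) {x : ℝ} (hx : x ∈ Ioo a b) (hxt : x ∉ t) :
    ∃ ξ ∈ Ioo a b, ((2 * r + #t)! : ℝ) * h x =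
      iteratedDeriv (2 * r + #t) h ξ * (nodePoly a b r t).eval x := by
  set W := nodePoly a b r t
  have hWx : W.eval x ≠ 0 := by
    rw [eval_nodePoly]
    refine mul_ne_zero (pow_ne_zero _ (mul_ne_zero ?_ ?_)) (prod_ne_zero_iff.2 fun ζ hζ => ?_)
    · exact sub_ne_zero.2 hx.1.ne'
    · exact sub_ne_zero.2 hx.2.ne
    · exact sub_ne_zero.2 (ne_of_mem_of_not_mem hζ hxt).symm
  set c := h x / W.eval x
  have hcx : h x = c * W.eval x := (div_mul_cancel₀ _ hWx).symm
  -- `Q` interpolates `h` at `x`, at the points of `t`, and to order `r` at `a` and `b`.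
  set Q := C c * W
  have hQa : (X - C a) ^ r ∣ Q :=
    ((pow_dvd_pow_of_dvd (dvd_mul_right _ _) r).mul_right _).mul_left _
  have hQb : (X - C b) ^ r ∣ Q :=
    ((pow_dvd_pow_of_dvd (dvd_mul_left _ _) r).mul_right _).mul_left _
  have hQtop : derivative^[2 * r + #t] Q = C (c * (2 * r + #t)!) := by
    rw [iterate_derivative_C_mul, ← natDegree_nodePoly a b r t,
      (nodePoly_monic a b r t).iterate_derivative_natDegree, C_mul]
  have hderiv : ∀ j ≤ 2 * r + #t, ∀ y, iteratedDeriv j (fun y => h y - Q.eval y) y =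
      iteratedDeriv j h y - (derivative^[j] Q).eval y :=
    fun j hj y => iteratedDeriv_sub_eval hh hj Q y
  have hend : ∀ e, (∀ j < r, iteratedDeriv j h e = 0) → (X - C e) ^ r ∣ Q →
      ∀ j < r, iteratedDeriv j (fun y => h y - Q.eval y) e = 0 := fun e he hQe j hj => by
    rw [hderiv j (by omega), he j hj, eval_iterate_derivative_eq_zero_of_pow_dvd hQe hj, sub_zero]
  have hzero : ∀ y ∈ insert x t, h y - Q.eval y = 0 := by
    intro y hy
    rcases Finset.mem_insert.1 hy with rfl | hy
    · simp [Q, ← hcx]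
    · simp [Q, W, eval_nodePoly_eq_zero_of_mem a b r hy, hht y hy]
  obtain ⟨t', ht', ht'0, hcard⟩ := exists_finset_iteratedDeriv_eq_zero hab
    (hh.sub (Q.contDiff_eval _)) (n := 2 * r + #t) (hend a ha hQa) (hend b hb hQb)
    (insert x t) (by simpa [Set.insert_subset_iff, hx] using ht) hzero
  rw [card_insert_of_notMem hxt] at hcard
  obtain ⟨ξ, hξ⟩ := card_pos.1 (by omega : 0 < #t')
  have hξ0 := ht'0 ξ hξ
  rw [hderiv _ le_rfl, hQtop, eval_C, sub_eq_zero] at hξ0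
  exact ⟨ξ, ht' hξ, by rw [hξ0, hcx]; ring⟩

theorem exists_factorial_mul_abs_iteratedDeriv_le {E : ℝ → ℝ} {a b : ℝ} (hab : a < b) {r k : ℕ}
    (hE : ContDiff ℝ (2 * r : ℕ) E) (ha : ∀ j < r, iteratedDeriv j E a = 0)
    (hb : ∀ j < r, iteratedDeriv j E b = 0) (hk : k ≤ r) {x : ℝ} (hx : x ∈ Ioo a b) :
    ∃ ξ ∈ Ioo a b, ((2 * r - k)! : ℝ) * |iteratedDeriv k E x| ≤
      |iteratedDeriv (2 * r) E ξ| * (((x - a) * (b - x)) ^ (r - k) * (b - a) ^ k) := by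
  obtain ⟨t₀, ht₀, ht₀0, hcard⟩ := exists_finset_iteratedDeriv_eq_zero hab
    (hE.of_le (by norm_cast; omega)) (n := k) ha hb ∅ (by simp) (by simp)
  obtain ⟨t, htt₀, rfl⟩ := exists_subset_card_eq (show k ≤ #t₀ by simp at hcard; omega)
  have ht : ↑t ⊆ Ioo a b := (coe_subset.2 htt₀).trans ht₀
  by_cases hxt : x ∈ t
  · refine ⟨x, hx, ?_⟩
    rw [ht₀0 x (htt₀ hxt), abs_zero, mul_zero]
    have := sub_nonneg.2 hx.1.le
    have := sub_nonneg.2 hx.2.le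
    have := sub_nonneg.2 hab.le
    positivity
  have hEk : ContDiff ℝ (2 * (r - #t) + #t : ℕ) (iteratedDeriv #t E) := by
    rw [iteratedDeriv_eq_iterate]
    exact ContDiff.iterate_deriv' _ #t (hE.of_le (by norm_cast; omega))
  obtain ⟨ξ, hξ, hfac⟩ := exists_factorial_mul_eq_iteratedDeriv_mul_eval_nodePoly hab hEk
    (fun j hj => by rw [iteratedDeriv_iteratedDeriv]; exact ha _ (by omega))
    (fun j hj => by rw [iteratedDeriv_iteratedDeriv]; exact hb _ (by omega))
    ht (fun y hy => ht₀0 y (htt₀ hy)) hx hxt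
  rw [iteratedDeriv_iteratedDeriv, show 2 * (r - #t) + #t + #t = 2 * r by omega,
    show 2 * (r - #t) + #t = 2 * r - #t by omega] at hfac
  refine ⟨ξ, hξ, ?_⟩
  calc ((2 * r - #t)! : ℝ) * |iteratedDeriv #t E x|
      = |iteratedDeriv (2 * r) E ξ| * |(nodePoly a b (r - #t) t).eval x| := by
        rw [← abs_mul, ← hfac, abs_mul, Nat.abs_cast]
    _ ≤ _ := by
        gcongr
        exact abs_eval_nodePoly_le (Ioo_subset_Icc_self hx) _ (ht.trans Ioo_subset_Icc_self)

theorem abs_le_sSup_image_abs {g : ℝ → ℝ} {a b y : ℝ} (hg : ContinuousOn g (Icc a b))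
    (hy : y ∈ Icc a b) : |g y| ≤ sSup ((fun z => |g z|) '' Icc a b) :=
  le_csSup (isCompact_Icc.image_of_continuousOn hg.abs).bddAbove ⟨y, hy, rfl⟩

theorem stmt_10 (m : ℕ) (xi xip : ℝ) (hx : xi < xip)
    (f : ℝ → ℝ) (hf : ContDiff ℝ (2 * m + 2 : ℕ) f)
    (p : Polynomial ℝ) (hdeg : p.natDegree ≤ 2 * m + 1)
    (hmatchl : ∀ k ≤ m, iteratedDeriv k f xi = (Polynomial.derivative^[k] p).eval xi)
    (hmatchr : ∀ k ≤ m, iteratedDeriv k f xip = (Polynomial.derivative^[k] p).eval xip) :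
    ∀ x ∈ Set.Ioo xi xip, ∀ k ≤ m + 1,
      |iteratedDeriv k f x - (Polynomial.derivative^[k] p).eval x|
        ≤ ((x - xi) * (xip - x)) ^ (m + 1 - k) * (xip - xi) ^ k /
            ((Nat.factorial (2 * m + 2 - 2 * k) : ℝ) * (Nat.factorial k : ℝ)) *
          sSup ((fun y => |iteratedDeriv (2 * m + 2) f y|) '' Set.Icc xi xip) := by
  intro x hxI k hk
  have hE : ∀ j ≤ 2 * m + 2, ∀ y, iteratedDeriv j (fun y => f y - p.eval y) y =
      iteratedDeriv j f y - (derivative^[j] p).eval y :=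
    fun j hj y => iteratedDeriv_sub_eval hf hj p y
  obtain ⟨ξ, hξ, hbound⟩ := exists_factorial_mul_abs_iteratedDeriv_le hx (r := m + 1)
    (hf.sub (p.contDiff_eval _))
    (fun j hj => by rw [hE j (by omega), hmatchl j (by omega), sub_self])
    (fun j hj => by rw [hE j (by omega), hmatchr j (by omega), sub_self]) hk hxI
  rw [show 2 * (m + 1) = 2 * m + 2 by ring, hE (2 * m + 2) le_rfl, hE k (by omega),
    iterate_derivative_eq_zero (show p.natDegree < 2 * m + 2 by omega), eval_zero,
    sub_zero] at hbound
  have hfM := abs_le_sSup_image_abs (hf.continuous_iteratedDeriv _ le_rfl).continuousOn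
    (Ioo_subset_Icc_self hξ)
  have hfact : (2 * m + 2 - 2 * k)! * k ! ≤ (2 * m + 2 - k)! := by
    rw [show 2 * m + 2 - k = 2 * m + 2 - 2 * k + k by omega]
    exact Nat.le_of_dvd (Nat.factorial_pos _) (Nat.factorial_mul_factorial_dvd_factorial_add _ _)
  have := sub_nonneg.2 hxI.1.le
  have := sub_nonneg.2 hxI.2.le
  have := sub_nonneg.2 hx.le
  rw [div_mul_eq_mul_div, le_div_iff₀ (by positivity)]
  calc _ ≤ ((2 * m + 2 - k)! : ℝ) * |iteratedDeriv k f x - (derivative^[k] p).eval x| := by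
        rw [mul_comm]
        gcongr
        exact_mod_cast hfact
    _ ≤ _ := hbound.trans (by rw [mul_comm]; gcongr)
end
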